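/- arXiv:1806.00065 — 13 statements merged into one kernel-verified Lean document; each statement's English description precedes it below -/
import Mathlib

section
/- Let L > 0, 0 < η₂ < 1, γ₃ > 1 and ς_0 > 0. Let (ς_k)_{k∈ℕ} be a sequence of positive reals starting at ς_0 such that, for every k: (i) ς_{k+1} ≤ γ₃ ς_k, and (ii) if ς_k ≥ L/(2(1−η₂)) then ς_{k+1} ≤ ς_k. Then for all k, ς_k ≤ max(ς_0, L γ₃ / (2(1−η₂))). -/
/-- Lemma 2.2: the regularization parameter never grows by more than a factor γ₃,
and does not increase once it reaches `L/(2(1-η₂))`; hence it stays bounded. -/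
theorem stmt_1 (L η₂ γ₃ ς₀ : ℝ) (hL : 0 < L) (hη₂ : 0 < η₂) (hη₂' : η₂ < 1)
    (hγ₃ : 1 < γ₃) (hς₀ : 0 < ς₀)
    (ς : ℕ → ℝ) (hstart : ς 0 = ς₀) (hpos : ∀ k, 0 < ς k)
    (hgrow : ∀ k, ς (k + 1) ≤ γ₃ * ς k)
    (hcap : ∀ k, L / (2 * (1 - η₂)) ≤ ς k → ς (k + 1) ≤ ς k) :
    ∀ k, ς k ≤ max ς₀ (L * γ₃ / (2 * (1 - η₂))) := by
  have hden : (0:ℝ) < 2 * (1 - η₂) := by nlinarith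
  intro k
  induction k with
  | zero => simpa [hstart] using le_max_left ς₀ _
  | succ k ih =>
    rcases le_or_gt (L / (2 * (1 - η₂))) (ς k) with h | h
    · exact le_trans (hcap k h) ih
    · have : ς (k + 1) ≤ γ₃ * (L / (2 * (1 - η₂))) :=
        le_trans (hgrow k) (by nlinarith [hpos k])
      refine le_trans this (le_trans (le_of_eq ?_) (le_max_right _ _))
      ring
end

section
/- Let 0 < γ₁ < 1 < γ₂, let ς_0 > 0 and ς_max > 0, and let k̄ ∈ ℕ. Let (ς_k)_{0 ≤ k ≤ k̄} be positive reals starting at ς_0 and let S ⊆ {0, …, k̄−1} be such that ς_{k+1} ≥ γ₁ ς_k for every k ∈ S, ς_{k+1} ≥ γ₂ ς_k for every k ∈ {0,…,k̄−1} \ S, and ς_{k̄} ≤ ς_max. Then k̄ ≤ (1 + |log γ₁| / log γ₂) · |S| + (1/log γ₂) · log(ς_max / ς_0). -/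
/-- Lemma 2.3: successful iterations may decrease ς by at most a factor γ₁,
unsuccessful iterations increase it by at least γ₂ > 1; since ς stays bounded
by ς_max, the total number of iterations k̄ is bounded in terms of the number
of successful iterations. -/
theorem stmt_2 (γ₁ γ₂ ς₀ ςmax : ℝ) (hγ₁ : 0 < γ₁) (hγ₁' : γ₁ < 1) (hγ₂ : 1 < γ₂)
    (hς₀ : 0 < ς₀) (hςmax : 0 < ςmax) (kbar : ℕ)
    (ς : ℕ → ℝ) (hstart : ς 0 = ς₀) (hpos : ∀ k ≤ kbar, 0 < ς k)
    (S : Finset ℕ) (hSsub : S ⊆ Finset.range kbar)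
    (hsucc : ∀ k ∈ S, γ₁ * ς k ≤ ς (k + 1))
    (hfail : ∀ k ∈ Finset.range kbar \ S, γ₂ * ς k ≤ ς (k + 1))
    (hbound : ς kbar ≤ ςmax) :
    (kbar : ℝ) ≤ (1 + |Real.log γ₁| / Real.log γ₂) * S.card
      + (1 / Real.log γ₂) * Real.log (ςmax / ς₀) := by
  have hγ₂0 : (0:ℝ) < γ₂ := lt_trans one_pos hγ₂
  -- main inductive bound
  have main : ∀ n ≤ kbar,
      γ₁ ^ (S ∩ Finset.range n).card * γ₂ ^ (Finset.range n \ S).card * ς₀ ≤ ς n := by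
    intro n hn
    induction n with
    | zero => simp [hstart]
    | succ m ih =>
      have hm : m ≤ kbar := Nat.le_of_succ_le hn
      have hmlt : m < kbar := hn
      have ihm := ih hm
      have hpow : (0:ℝ) < γ₁ ^ (S ∩ Finset.range m).card * γ₂ ^ (Finset.range m \ S).card * ς₀ :=
        by positivity
      by_cases hmS : m ∈ S
      · have h1 : S ∩ Finset.range (m+1) = insert m (S ∩ Finset.range m) := by
          ext x
          simp only [Finset.mem_inter, Finset.mem_range, Finset.mem_insert,
            Nat.lt_succ_iff_lt_or_eq]
          constructor
          · rintro ⟨hx, hx2 | rfl⟩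
            · exact Or.inr ⟨hx, hx2⟩
            · exact Or.inl rfl
          · rintro (rfl | ⟨hx, hx2⟩)
            · exact ⟨hmS, Or.inr rfl⟩
            · exact ⟨hx, Or.inl hx2⟩
        have h2 : Finset.range (m+1) \ S = Finset.range m \ S := by
          ext x
          simp only [Finset.mem_sdiff, Finset.mem_range, Nat.lt_succ_iff_lt_or_eq]
          constructor
          · rintro ⟨hx | rfl, hx2⟩
            · exact ⟨hx, hx2⟩
            · exact absurd hmS hx2
          · rintro ⟨hx, hx2⟩; exact ⟨Or.inl hx, hx2⟩
        have hnot : m ∉ S ∩ Finset.range m := by simp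
        rw [h1, h2, Finset.card_insert_of_notMem hnot, pow_succ]
        have := hsucc m hmS
        have hpm := hpos m hm
        calc γ₁ ^ (S ∩ Finset.range m).card * γ₁ * γ₂ ^ (Finset.range m \ S).card * ς₀
            = γ₁ * (γ₁ ^ (S ∩ Finset.range m).card * γ₂ ^ (Finset.range m \ S).card * ς₀) := by
              ring
          _ ≤ γ₁ * ς m := by
              exact mul_le_mul_of_nonneg_left ihm (le_of_lt hγ₁)
          _ ≤ ς (m+1) := this
      · have h1 : S ∩ Finset.range (m+1) = S ∩ Finset.range m := by
          ext x
          simp only [Finset.mem_inter, Finset.mem_range, Nat.lt_succ_iff_lt_or_eq]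
          constructor
          · rintro ⟨hx, hx2 | rfl⟩
            · exact ⟨hx, hx2⟩
            · exact absurd hx hmS
          · rintro ⟨hx, hx2⟩; exact ⟨hx, Or.inl hx2⟩
        have h2 : Finset.range (m+1) \ S = insert m (Finset.range m \ S) := by
          ext x
          simp only [Finset.mem_sdiff, Finset.mem_range, Finset.mem_insert,
            Nat.lt_succ_iff_lt_or_eq]
          constructor
          · rintro ⟨hx | rfl, hx2⟩
            · exact Or.inr ⟨hx, hx2⟩
            · exact Or.inl rfl
          · rintro (rfl | ⟨hx, hx2⟩)
            · exact ⟨Or.inr rfl, hmS⟩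
            · exact ⟨Or.inl hx, hx2⟩
        have hnot : m ∉ Finset.range m \ S := by simp
        rw [h1, h2, Finset.card_insert_of_notMem hnot, pow_succ]
        have hmem : m ∈ Finset.range kbar \ S := by
          simp [Finset.mem_sdiff, Finset.mem_range, hmlt, hmS]
        have := hfail m hmem
        calc γ₁ ^ (S ∩ Finset.range m).card * (γ₂ ^ (Finset.range m \ S).card * γ₂) * ς₀
            = γ₂ * (γ₁ ^ (S ∩ Finset.range m).card * γ₂ ^ (Finset.range m \ S).card * ς₀) := by
              ring
          _ ≤ γ₂ * ς m := mul_le_mul_of_nonneg_left ihm (le_of_lt hγ₂0)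
          _ ≤ ς (m+1) := this
  have hSinter : S ∩ Finset.range kbar = S := Finset.inter_eq_left.mpr hSsub
  have hcard : (Finset.range kbar \ S).card = kbar - S.card := by
    rw [Finset.card_sdiff_of_subset hSsub, Finset.card_range]
  have hsle : S.card ≤ kbar := by
    simpa using Finset.card_le_card hSsub
  have key : γ₁ ^ S.card * γ₂ ^ (kbar - S.card) * ς₀ ≤ ςmax := by
    have := main kbar le_rfl
    rw [hSinter, hcard] at this
    exact this.trans hbound
  set s := S.card with hs
  set u := kbar - s with hu
  have hku : (kbar : ℝ) = s + u := by
    rw [hu]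
    push_cast [Nat.cast_sub hsle]
    ring
  have hlogle : Real.log (γ₁ ^ s * γ₂ ^ u * ς₀) ≤ Real.log ςmax :=
    Real.log_le_log (by positivity) key
  rw [Real.log_mul (by positivity) (ne_of_gt hς₀), Real.log_mul (by positivity) (by positivity),
    Real.log_pow, Real.log_pow] at hlogle
  have hL : 0 < Real.log γ₂ := Real.log_pos hγ₂
  have hl1 : Real.log γ₁ < 0 := Real.log_neg hγ₁ hγ₁'
  rw [abs_of_neg hl1, Real.log_div (ne_of_gt hςmax) (ne_of_gt hς₀)]
  rw [hku]
  have hstep : ((s:ℝ) + u) * Real.log γ₂ ≤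
      (1 + -Real.log γ₁ / Real.log γ₂) * s * Real.log γ₂
        + (1 / Real.log γ₂) * (Real.log ςmax - Real.log ς₀) * Real.log γ₂ := by
    have e1 : (1 + -Real.log γ₁ / Real.log γ₂) * s * Real.log γ₂
        = s * Real.log γ₂ - s * Real.log γ₁ := by
      field_simp; ring
    have e2 : (1 / Real.log γ₂) * (Real.log ςmax - Real.log ς₀) * Real.log γ₂
        = Real.log ςmax - Real.log ς₀ := by
      field_simp
    rw [e1, e2]
    nlinarith [hlogle]
  nlinarith [hstep, hL]
end

section
/- Let E be a real inner product space, g, s ∈ E, H a continuous linear operator on E, ς > 0, and λ ∈ ℝ such that ⟨v, H v⟩ ≥ λ ‖v‖² for all v ∈ E. If ⟨g, s⟩ + (1/2)⟨s, H s⟩ + (ς/3)‖s‖³ ≤ 0, then ‖s‖ ≤ √(3‖g‖/ς) + (3/(2ς)) · max(0, −λ). -/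
open scoped RealInnerProductSpace

lemma quad_bound (a b t : ℝ) (ha : 0 ≤ a) (hb : 0 ≤ b) (ht : 0 ≤ t)
    (h : t ^ 2 ≤ a + b * t) : t ≤ Real.sqrt a + b := by
  by_contra hc
  push_neg at hc
  have hs := Real.sq_sqrt ha
  have hsn := Real.sqrt_nonneg a
  nlinarith [sq_nonneg (t - Real.sqrt a - b)]

/-- Lemma C.1: step-size bound for the cubic-regularized subproblem. -/
theorem stmt_3 {E : Type*} [NormedAddCommGroup E] [InnerProductSpace ℝ E]
    (g s : E) (H : E →L[ℝ] E) (ς lam : ℝ) (hς : 0 < ς)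
    (hlam : ∀ v : E, lam * ‖v‖ ^ 2 ≤ ⟪v, H v⟫)
    (hm : ⟪g, s⟫ + (1 / 2) * ⟪s, H s⟫ + ς / 3 * ‖s‖ ^ 3 ≤ 0) :
    ‖s‖ ≤ Real.sqrt (3 * ‖g‖ / ς) + 3 / (2 * ς) * max 0 (-lam) := by
  set t := ‖s‖ with htdef
  set μ := max 0 (-lam) with hμdef
  have hμ0 : 0 ≤ μ := le_max_left _ _
  have hμl : -lam ≤ μ := le_max_right _ _
  have ht0 : 0 ≤ t := norm_nonneg s
  have hcs : -(‖g‖ * t) ≤ ⟪g, s⟫ := neg_le_of_abs_le (abs_real_inner_le_norm g s)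
  have hH : lam * t ^ 2 ≤ ⟪s, H s⟫ := hlam s
  have key : ς / 3 * t ^ 3 ≤ ‖g‖ * t + μ / 2 * t ^ 2 := by nlinarith
  rcases eq_or_lt_of_le ht0 with h0 | h0
  · rw [← h0]
    positivity
  · have hmain : ς * t ^ 2 ≤ 3 * ‖g‖ + 3 / 2 * (μ * t) := by nlinarith
    have h2 : t ^ 2 ≤ 3 * ‖g‖ / ς + 3 / (2 * ς) * μ * t := by
      calc t ^ 2 = ς * t ^ 2 / ς := by field_simp
        _ ≤ (3 * ‖g‖ + 3 / 2 * (μ * t)) / ς := by gcongr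
        _ = 3 * ‖g‖ / ς + 3 / (2 * ς) * μ * t := by field_simp
    exact quad_bound _ _ _ (by positivity) (by positivity) ht0 h2
end

section
/- Let E be a real inner product space, x ∈ E with ‖x‖ = 1, and s ∈ E with ⟨x, s⟩ = 0. Define R : {u : ⟨x,u⟩ = 0} → E (or on all of E near s) by R(u) = (x+u)/‖x+u‖. Then R is differentiable at s and, for every z ∈ E with ⟨x, z⟩ = 0, the Fréchet derivative satisfies DR(s)[z] = (1/√(1+‖s‖²)) · (z − ⟨R(s), z⟩ · R(s)). -/
open scoped RealInnerProductSpace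

/-- Differential of the sphere retraction R(u) = (x+u)/‖x+u‖ at a tangent
vector s ⊥ x, applied to a tangent vector z ⊥ x (eq. 66 of the paper). -/
theorem stmt_9 {E : Type*} [NormedAddCommGroup E] [InnerProductSpace ℝ E]
    (x s : E) (hx : ‖x‖ = 1) (hs : ⟪x, s⟫ = 0)
    (R : E → E) (hR : ∀ u : E, R u = ‖x + u‖⁻¹ • (x + u)) :
    DifferentiableAt ℝ R s ∧
      ∀ z : E, ⟪x, z⟫ = 0 →
        fderiv ℝ R s z
          = (Real.sqrt (1 + ‖s‖ ^ 2))⁻¹ • (z - ⟪R s, z⟫ • R s) := by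
  have hRfun : R = fun u => ‖x + u‖⁻¹ • (x + u) := funext hR
  subst hRfun
  set v : E := x + s with hv_def
  have hvv : ⟪v, v⟫ = 1 + ‖s‖ ^ 2 := by
    simp [hv_def, inner_add_add_self, hs, real_inner_comm x s,
      real_inner_self_eq_norm_sq, hx]
    rw [norm_add_sq_real, hs, hx]; ring
  have hvvpos : (0:ℝ) < ⟪v, v⟫ := by rw [hvv]; positivity
  have hvnorm : ‖v‖ = Real.sqrt (1 + ‖s‖ ^ 2) := by
    rw [← hvv, real_inner_self_eq_norm_sq, Real.sqrt_sq (norm_nonneg v)]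
  have hvn0 : ‖v‖ ≠ 0 := by
    rw [hvnorm]
    positivity
  -- derivative of u ↦ x + u
  have hF : HasFDerivAt (fun u : E => x + u) (ContinuousLinearMap.id ℝ E) s :=
    (hasFDerivAt_id s).const_add x
  -- derivative of u ↦ ⟪x+u, x+u⟫
  have hinner := hF.inner ℝ hF
  -- derivative of u ↦ √⟪x+u, x+u⟫ = ‖x+u‖
  have hsqrt := (Real.hasDerivAt_sqrt hvvpos.ne').comp_hasFDerivAt s hinner
  have hnorm : HasFDerivAt (fun u : E => ‖x + u‖)
      ((1 / (2 * Real.sqrt ⟪v, v⟫)) •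
        ((fderivInnerCLM ℝ (v, v)).comp
          ((ContinuousLinearMap.id ℝ E).prod (ContinuousLinearMap.id ℝ E)))) s := by
    have heq : (fun u : E => ‖x + u‖) = ((fun x => Real.sqrt x) ∘ fun t => ⟪x + t, x + t⟫) := by
      funext u
      simp only [Function.comp_apply]
      rw [real_inner_self_eq_norm_sq, Real.sqrt_sq (norm_nonneg _)]
    rw [heq]
    exact hsqrt
  have hninv := (hasDerivAt_inv hvn0).comp_hasFDerivAt s hnorm
  simp only [Function.comp_def] at hninv
  have hR' := hninv.smul hF
  refine ⟨hR'.differentiableAt, fun z hz => ?_⟩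
  rw [HasFDerivAt.fderiv (f := fun u => ‖x + u‖⁻¹ • (x + u)) hR']
  have hvz : ⟪v, z⟫ = ⟪s, z⟫ := by simp [hv_def, inner_add_left, hz]
  have hsqv : Real.sqrt ⟪v, v⟫ = ‖v‖ := by
    rw [real_inner_self_eq_norm_sq, Real.sqrt_sq (norm_nonneg _)]
  simp only [ContinuousLinearMap.add_apply, ContinuousLinearMap.smul_apply,
    ContinuousLinearMap.smulRight_apply, ContinuousLinearMap.comp_apply,
    ContinuousLinearMap.prod_apply, ContinuousLinearMap.coe_id', id_eq,
    fderivInnerCLM_apply, ContinuousLinearMap.neg_apply, smul_eq_mul]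
  rw [hsqv, ← hv_def, real_inner_smul_left, real_inner_comm z v, ← hvnorm,
    smul_sub, smul_smul, smul_smul, sub_eq_add_neg, ← neg_smul]
  congr 1
  field_simp
  ring_nf
end

section
/- Let E be a real inner product space, x ∈ E with ‖x‖ = 1, and s ∈ E with ⟨x, s⟩ = 0. Let R(u) = (x+u)/‖x+u‖. Then for every z ∈ E with ⟨x, z⟩ = 0, the derivative satisfies ‖DR(s)[z]‖ ≥ ‖z‖/(1 + ‖s‖²); moreover, if s ≠ 0 then ‖DR(s)[s]‖ = ‖s‖/(1+‖s‖²), so 1/(1+‖s‖²) is exactly the smallest singular value of DR(s) restricted to the tangent space at x. -/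
open scoped RealInnerProductSpace

set_option maxHeartbeats 1000000 in
/-- Lemma D.1 (sphere case): lower bound ‖DR(s)[z]‖ ≥ ‖z‖/(1+‖s‖²) for tangent
z, with equality pattern ‖DR(s)[s]‖ = ‖s‖/(1+‖s‖²), so 1/(1+‖s‖²) is exactly
the smallest singular value of DR(s) on the tangent space at x. -/
theorem stmt_10 {E : Type*} [NormedAddCommGroup E] [InnerProductSpace ℝ E]
    (x s : E) (hx : ‖x‖ = 1) (hs : ⟪x, s⟫ = 0)
    (R : E → E) (hR : ∀ u : E, R u = ‖x + u‖⁻¹ • (x + u)) :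
    (∀ z : E, ⟪x, z⟫ = 0 → ‖z‖ / (1 + ‖s‖ ^ 2) ≤ ‖fderiv ℝ R s z‖) ∧
      (s ≠ 0 → ‖fderiv ℝ R s s‖ = ‖s‖ / (1 + ‖s‖ ^ 2)) := by
  have hRfun : R = fun u => ‖x + u‖⁻¹ • (x + u) := funext hR
  have hs' : ⟪s, x⟫ = 0 := by rw [real_inner_comm]; exact hs
  set v := x + s with hv
  set m : ℝ := 1 + ‖s‖ ^ 2 with hm
  have hm0 : (0:ℝ) < m := by rw [hm]; positivity
  have hvsq : ‖v‖ ^ 2 = m := by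
    rw [hv, hm, ← real_inner_self_eq_norm_sq, inner_add_add_self, hs,
      real_inner_self_eq_norm_sq, real_inner_self_eq_norm_sq, hx, real_inner_comm, hs]
    ring
  set n : ℝ := ‖v‖ with hn
  have hn0 : 0 < n := by nlinarith [norm_nonneg v]
  have hnne : n ≠ 0 := ne_of_gt hn0
  set L : E →L[ℝ] E :=
    n⁻¹ • ContinuousLinearMap.id ℝ E + ((-(n⁻¹ * n⁻¹ * n⁻¹)) • innerSL ℝ v).smulRight v with hL
  have hA : HasFDerivAt (fun u => x + u) (ContinuousLinearMap.id ℝ E) s :=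
    (hasFDerivAt_id s).const_add x
  have hNsq : HasFDerivAt (fun u => ‖x + u‖ ^ 2)
      (2 • (innerSL ℝ v).comp (ContinuousLinearMap.id ℝ E)) s := hA.norm_sq
  have hvsqne : ‖x + s‖ ^ 2 ≠ 0 := by rw [← hv, hvsq]; exact ne_of_gt hm0
  have hNorm : HasFDerivAt (fun u => ‖x + u‖)
      ((1 / (2 * Real.sqrt (‖x + s‖ ^ 2))) • (2 • (innerSL ℝ v).comp (ContinuousLinearMap.id ℝ E))) s := by
    have := hNsq.sqrt hvsqne
    simpa [Real.sqrt_sq (norm_nonneg _)] using this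
  have hInv : HasFDerivAt (fun u => ‖x + u‖⁻¹)
      ((-(n ^ 2)⁻¹) • ((1 / (2 * Real.sqrt (‖x + s‖ ^ 2))) • (2 • (innerSL ℝ v).comp (ContinuousLinearMap.id ℝ E)))) s := by
    have h := (hasDerivAt_inv (x := ‖x + s‖) (by rw [← hv]; exact hnne)).comp_hasFDerivAt s hNorm
    simpa [← hv, hn, Function.comp_def] using h
  have hD : HasFDerivAt R L s := by
    rw [hRfun]
    have h := hInv.smul hA
    convert h using 1
    · rfl
    ext z
    simp only [hL, ContinuousLinearMap.add_apply, ContinuousLinearMap.smul_apply,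
      ContinuousLinearMap.smulRight_apply, ContinuousLinearMap.coe_smul',
      ContinuousLinearMap.id_apply, ContinuousLinearMap.coe_comp', Function.comp_apply,
      Pi.smul_apply, innerSL_apply_apply, smul_smul, ← hv, ← hn]
    have hsqrt : Real.sqrt (n ^ 2) = n := Real.sqrt_sq hn0.le
    rw [hsqrt]
    have h2t : (-(n ^ 2)⁻¹ * (1 / (2 * n))) • (2 • (⟪v, z⟫ : ℝ)) = -(n⁻¹ * n⁻¹ * n⁻¹) • ⟪v, z⟫ := by
      simp only [smul_eq_mul, nsmul_eq_mul, Nat.cast_ofNat]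
      field_simp
    rw [h2t]
  have hfd : fderiv ℝ R s = L := hD.fderiv
  have key : ∀ z : E, ⟪x, z⟫ = 0 → ‖L z‖ ^ 2 = ‖z‖ ^ 2 / m - ⟪s, z⟫ ^ 2 / m ^ 2 := by
    intro z hz
    have hvz : ⟪v, z⟫ = ⟪s, z⟫ := by rw [hv, inner_add_left, hz, zero_add]
    have hnn : n ^ 2 = m := hvsq
    have hLz : L z = n⁻¹ • z + (-(n⁻¹ * n⁻¹ * n⁻¹) * ⟪s, z⟫) • v := by
      simp [hL, hvz, smul_smul]
    rw [hLz, ← real_inner_self_eq_norm_sq]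
    simp only [inner_add_add_self, real_inner_smul_left, real_inner_smul_right]
    have hzv : ⟪z, v⟫ = ⟪s, z⟫ := by rw [real_inner_comm]; exact hvz
    rw [real_inner_self_eq_norm_sq z, real_inner_self_eq_norm_sq v, ← hn]
    simp only [hzv, hvz]
    rw [← hnn]
    field_simp
    ring
  refine ⟨?_, ?_⟩
  · intro z hz
    rw [hfd]
    have hk := key z hz
    have hcs : ⟪s, z⟫ ^ 2 ≤ ‖s‖ ^ 2 * ‖z‖ ^ 2 := by
      have h := abs_real_inner_le_norm s z
      nlinarith [abs_nonneg ⟪s, z⟫, sq_abs ⟪s, z⟫]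
    have h2 : ‖z‖ ^ 2 ≤ ‖z‖ ^ 2 * m - ⟪s, z⟫ ^ 2 := by rw [hm]; nlinarith
    have heq : ‖z‖ ^ 2 / m - ⟪s, z⟫ ^ 2 / m ^ 2 = (‖z‖ ^ 2 * m - ⟪s, z⟫ ^ 2) / m ^ 2 := by
      field_simp
    have hlow : (‖z‖ / m) ^ 2 ≤ ‖L z‖ ^ 2 := by
      rw [hk, div_pow, heq]
      exact (div_le_div_iff_of_pos_right (pow_pos hm0 2)).mpr h2
    calc ‖z‖ / m = Real.sqrt ((‖z‖ / m) ^ 2) :=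
          (Real.sqrt_sq (div_nonneg (norm_nonneg _) hm0.le)).symm
      _ ≤ Real.sqrt (‖L z‖ ^ 2) := Real.sqrt_le_sqrt hlow
      _ = ‖L z‖ := Real.sqrt_sq (norm_nonneg _)
  · intro _
    rw [hfd]
    have hk := key s hs
    rw [real_inner_self_eq_norm_sq] at hk
    have hsq : ‖L s‖ ^ 2 = (‖s‖ / m) ^ 2 := by
      rw [hk, div_pow, hm]
      have hne : (1 + ‖s‖ ^ 2 : ℝ) ≠ 0 := by positivity
      field_simp
      ring
    have := congrArg Real.sqrt hsq
    rwa [Real.sqrt_sq (norm_nonneg _),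
      Real.sqrt_sq (div_nonneg (norm_nonneg _) hm0.le)] at this
end

section
/- Let E be a real inner product space, x ∈ E with ‖x‖ = 1, and s ∈ E with ⟨x, s⟩ = 0. Let R(u) = (x+u)/‖x+u‖. Then for every z ∈ E with ⟨x, z⟩ = 0, the derivative satisfies ‖DR(s)[z]‖ ≤ ‖z‖/√(1 + ‖s‖²) ≤ ‖z‖. -/
open scoped RealInnerProductSpace

/-- Proposition 6.4, property (1) of second-order niceness for the sphere
retraction: ‖DR(s)[z]‖ ≤ ‖z‖/√(1+‖s‖²) ≤ ‖z‖ for tangent z. -/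
theorem stmt_11 {E : Type*} [NormedAddCommGroup E] [InnerProductSpace ℝ E]
    (x s : E) (hx : ‖x‖ = 1) (hs : ⟪x, s⟫ = 0)
    (R : E → E) (hR : ∀ u : E, R u = ‖x + u‖⁻¹ • (x + u)) :
    ∀ z : E, ⟪x, z⟫ = 0 →
      ‖fderiv ℝ R s z‖ ≤ ‖z‖ / Real.sqrt (1 + ‖s‖ ^ 2) ∧
        ‖z‖ / Real.sqrt (1 + ‖s‖ ^ 2) ≤ ‖z‖ := by
  intro z hz
  set v := x + s with hv
  have hv2 : ‖v‖ ^ 2 = 1 + ‖s‖ ^ 2 := by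
    rw [hv, norm_add_sq_real, hx, hs]; ring
  have hvpos : (0:ℝ) < ‖v‖ := by nlinarith [norm_nonneg v, sq_nonneg ‖s‖]
  have hvv : ⟪v, v⟫ = ‖v‖ ^ 2 := real_inner_self_eq_norm_sq v
  have hvvne : ⟪v, v⟫ ≠ 0 := by rw [hvv]; positivity
  have hf : HasFDerivAt (fun u : E => x + u) (ContinuousLinearMap.id ℝ E) s :=
    (hasFDerivAt_id s).const_add x
  have hinner := hf.inner ℝ hf
  have hsqrt := hinner.sqrt hvvne
  have hinv := (hasDerivAt_inv (by
      rw [Real.sqrt_ne_zero']; rw [hvv]; positivity)).comp_hasFDerivAt s hsqrt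
  have hsmul := hinv.smul hf
  have hRe : R = fun u : E => (Real.sqrt ⟪x + u, x + u⟫)⁻¹ • (x + u) := by
    funext u
    rw [hR, real_inner_self_eq_norm_sq, Real.sqrt_sq (norm_nonneg _)]
  have hD : HasFDerivAt R ((Real.sqrt ⟪v, v⟫)⁻¹ • ContinuousLinearMap.id ℝ E +
      (-(Real.sqrt ⟪v, v⟫ ^ 2)⁻¹ • (1 / (2 * Real.sqrt ⟪v, v⟫)) •
        (fderivInnerCLM ℝ (v, v)).comp
          ((ContinuousLinearMap.id ℝ E).prod (ContinuousLinearMap.id ℝ E))).smulRight v) s := by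
    rw [hRe]; exact hsmul
  rw [hD.fderiv]
  have hsq : Real.sqrt ⟪v, v⟫ = ‖v‖ := by rw [hvv, Real.sqrt_sq (norm_nonneg v)]
  simp only [ContinuousLinearMap.add_apply, ContinuousLinearMap.smul_apply,
    ContinuousLinearMap.smulRight_apply, ContinuousLinearMap.coe_comp',
    Function.comp_apply, ContinuousLinearMap.id_apply,
    ContinuousLinearMap.prod_apply, fderivInnerCLM_apply, ← hv, hsq]
  show ‖‖v‖⁻¹ • z + (-(‖v‖ ^ 2)⁻¹ * (1 / (2 * ‖v‖) * (⟪v, z⟫ + ⟪z, v⟫))) • v‖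
      ≤ ‖z‖ / Real.sqrt (1 + ‖s‖ ^ 2) ∧ ‖z‖ / Real.sqrt (1 + ‖s‖ ^ 2) ≤ ‖z‖
  have hsqrt1 : Real.sqrt (1 + ‖s‖ ^ 2) = ‖v‖ := by
    rw [← hv2, Real.sqrt_sq (norm_nonneg v)]
  constructor
  · rw [hsqrt1]
    have hzv : ⟪z, v⟫ = ⟪v, z⟫ := (real_inner_comm z v).symm
    rw [hzv]
    set t : ℝ := ⟪v, z⟫ with ht
    set a : ℝ := ‖v‖⁻¹ with ha
    set b : ℝ := -(‖v‖ ^ 2)⁻¹ * (1 / (2 * ‖v‖) * (t + t)) with hb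
    have hw2 : ‖a • z + b • v‖ ^ 2 = a ^ 2 * ‖z‖ ^ 2 + 2 * (a * b * t) + b ^ 2 * ‖v‖ ^ 2 := by
      rw [norm_add_sq_real, real_inner_smul_left, real_inner_smul_right, hzv,
        norm_smul, norm_smul]
      simp only [Real.norm_eq_abs, mul_pow, sq_abs]
      ring
    have hbval : b = -(t / ‖v‖ ^ 3) := by
      rw [hb]; field_simp; ring
    have hle : ‖a • z + b • v‖ ^ 2 ≤ (‖z‖ / ‖v‖) ^ 2 := by
      rw [hw2, hbval, ha]
      have hcalc : ‖v‖⁻¹ ^ 2 * ‖z‖ ^ 2 + 2 * (‖v‖⁻¹ * -(t / ‖v‖ ^ 3) * t)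
          + (-(t / ‖v‖ ^ 3)) ^ 2 * ‖v‖ ^ 2 = (‖z‖ / ‖v‖) ^ 2 - t ^ 2 / ‖v‖ ^ 4 := by
        field_simp
        ring
      rw [hcalc]
      have : t ^ 2 / ‖v‖ ^ 4 ≥ 0 := by positivity
      linarith
    have := Real.sqrt_le_sqrt hle
    rwa [Real.sqrt_sq (norm_nonneg _), Real.sqrt_sq (by positivity)] at this
  · exact div_le_self (norm_nonneg z) (by
      rw [hsqrt1]; nlinarith [sq_nonneg ‖s‖])
end

section
/- Let E be a real inner product space, x ∈ E with ‖x‖ = 1, and s, ṡ ∈ E with ⟨x, s⟩ = ⟨x, ṡ⟩ = 0. Define the curve c : ℝ → E by c(t) = (x+s+t·ṡ)/‖x+s+t·ṡ‖ (defined near t = 0), and let a ∈ E be the second derivative of c at t = 0. Let P : E → E be the orthogonal projection onto the orthogonal complement of c(0), i.e., P(v) = v − ⟨c(0), v⟩·c(0). Then P(a) = (−2⟨s, ṡ⟩/(1+‖s‖²)^{3/2}) · P(ṡ), and consequently ‖P(a)‖ ≤ 2 ‖s‖ ‖ṡ‖². -/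
open scoped RealInnerProductSpace

/-- Proposition 6.4, property (3) of second-order niceness for the sphere
retraction: the tangential projection of the second derivative of
c(t) = R_x(s + t ṡ) at t = 0 equals (−2⟪s,ṡ⟫/(1+‖s‖²)^{3/2}) P(ṡ), hence its
norm is at most 2‖s‖‖ṡ‖². -/
theorem stmt_12 {E : Type*} [NormedAddCommGroup E] [InnerProductSpace ℝ E]
    (x s sd : E) (hx : ‖x‖ = 1) (hs : ⟪x, s⟫ = 0) (hsd : ⟪x, sd⟫ = 0)
    (c : ℝ → E) (hc : ∀ t : ℝ, c t = ‖x + s + t • sd‖⁻¹ • (x + s + t • sd))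
    (a : E) (ha : a = deriv (deriv c) 0)
    (P : E → E) (hP : ∀ v : E, P v = v - ⟪c 0, v⟫ • c 0) :
    P a = (-2 * ⟪s, sd⟫ / (1 + ‖s‖ ^ 2) ^ ((3 : ℝ) / 2)) • P sd ∧
      ‖P a‖ ≤ 2 * ‖s‖ * ‖sd‖ ^ 2 := by
  set y : E := x + s with hy
  set α : ℝ := ⟪s, sd⟫ with hα
  set Q : ℝ := 1 + ‖s‖ ^ 2 with hQdef
  set β : ℝ := ‖sd‖ ^ 2 with hβ
  have hQ1 : (1:ℝ) ≤ Q := by nlinarith [sq_nonneg ‖s‖]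
  have hQ0 : (0:ℝ) < Q := by linarith
  have hyy : ⟪y, y⟫ = Q := by
    rw [hy, real_inner_add_add_self, hs, real_inner_self_eq_norm_sq,
      real_inner_self_eq_norm_sq, hx]
    ring
  have hysd : ⟪y, sd⟫ = α := by
    rw [hy, inner_add_left, hsd, zero_add]
  set u : ℝ → E := fun t => y + t • sd with hu
  set q : ℝ → ℝ := fun t => Q + 2*α*t + β*t^2 with hq
  have hq0 : q 0 = Q := by simp [hq]
  have hqu : ∀ t : ℝ, ‖u t‖ ^ 2 = q t := by
    intro t
    rw [← real_inner_self_eq_norm_sq]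
    simp only [hu, hq]
    rw [real_inner_add_add_self, hyy, real_inner_smul_right,
      real_inner_smul_left, real_inner_smul_right, hysd, real_inner_self_eq_norm_sq, ← hβ]
    ring
  have hrpow : ∀ v : E, ‖v‖⁻¹ = ((‖v‖^2 : ℝ)) ^ (-(1:ℝ)/2 : ℝ) := by
    intro v
    rcases eq_or_lt_of_le (norm_nonneg v) with h | h
    · rw [← h]
      simp [Real.zero_rpow (by norm_num : (-(1:ℝ)/2) ≠ 0)]
    · rw [show (-(1:ℝ)/2 : ℝ) = -(1/2) by norm_num,
        Real.rpow_neg (by positivity), ← Real.rpow_natCast ‖v‖ 2,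
        ← Real.rpow_mul (le_of_lt h)]
      norm_num
  have hcu : ∀ t : ℝ, c t = (q t) ^ (-(1:ℝ)/2 : ℝ) • u t := by
    intro t
    rw [hc t, show x + s + t • sd = u t from rfl, hrpow, hqu]
  have hu' : ∀ t : ℝ, HasDerivAt u sd t := by
    intro t
    have := ((hasDerivAt_id t).smul_const sd).const_add y
    simpa [hu] using this
  have hq' : ∀ t : ℝ, HasDerivAt q (2*α + 2*β*t) t := by
    intro t
    have h1 := (hasDerivAt_id t).const_mul (2*α)
    have h2 := (hasDerivAt_pow 2 t).const_mul β
    have := ((hasDerivAt_const t Q).add h1).add h2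
    convert this using 1
    · rfl
    · rfl
    · rfl
    simp; ring
  set g : ℝ → E := fun t =>
    (-(α + β * t) * (q t) ^ (-(3:ℝ)/2 : ℝ)) • u t + ((q t) ^ (-(1:ℝ)/2 : ℝ)) • sd with hg
  have hA : ∀ t : ℝ, 0 < q t → HasDerivAt c (g t) t := by
    intro t ht
    have hcfun : c = fun t => (q t) ^ (-(1:ℝ)/2 : ℝ) • u t := funext hcu
    rw [hcfun]
    have h1 : HasDerivAt (fun t => (q t) ^ (-(1:ℝ)/2 : ℝ))
        ((2*α + 2*β*t) * (-(1:ℝ)/2) * q t ^ ((-(1:ℝ)/2) - 1)) t :=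
      (hq' t).rpow_const (Or.inl ht.ne')
    have h2 := h1.smul (hu' t)
    convert h2 using 1
    · rfl
    rw [hg]
    rw [show ((-(1:ℝ)/2) - 1 : ℝ) = (-(3:ℝ)/2) by norm_num]
    module
  have hqev : ∀ᶠ t in nhds 0, 0 < q t := by
    have hqc : Continuous q := by fun_prop
    have : {t : ℝ | 0 < q t} ∈ nhds 0 :=
      (isOpen_lt continuous_const hqc).mem_nhds (by simpa [hq0] using hQ0)
    exact this
  have hdcg : deriv c =ᶠ[nhds 0] g := hqev.mono fun t ht => (hA t ht).deriv
  -- second derivative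
  set a0 : E := (3*α^2 * Q ^ (-(5:ℝ)/2 : ℝ) - β * Q ^ (-(3:ℝ)/2 : ℝ)) • y
      + (-2*α*Q^(-(3:ℝ)/2 : ℝ)) • sd with ha0
  have hB : HasDerivAt g a0 0 := by
    have hq'0 : HasDerivAt q (2*α) 0 := by simpa using hq' 0
    have hQne : q 0 ≠ 0 := by rw [hq0]; exact hQ0.ne'
    have h1 : HasDerivAt (fun t => -(α + β * t)) (-β) 0 := by
      have := ((hasDerivAt_id (0:ℝ)).const_mul β).const_add α
      convert this.neg using 1
      · rfl
      · rfl
      · rfl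
      · simp
    have h2 : HasDerivAt (fun t => (q t) ^ (-(3:ℝ)/2 : ℝ))
        ((2*α) * (-(3:ℝ)/2) * Q ^ ((-(3:ℝ)/2) - 1)) 0 := by
      have := hq'0.rpow_const (p := -(3:ℝ)/2) (Or.inl hQne)
      rwa [hq0] at this
    have h3 : HasDerivAt (fun t => (q t) ^ (-(1:ℝ)/2 : ℝ))
        ((2*α) * (-(1:ℝ)/2) * Q ^ ((-(1:ℝ)/2) - 1)) 0 := by
      have := hq'0.rpow_const (p := -(1:ℝ)/2) (Or.inl hQne)
      rwa [hq0] at this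
    have h4 := h1.mul h2
    have h5 := (h4.smul (hu' 0)).add (h3.smul_const sd)
    convert h5 using 1
    · rfl
    rw [ha0]
    have hu0 : u 0 = y := by simp [hu]
    simp only [Pi.mul_apply]
    rw [hu0, hq0]
    rw [show ((-(3:ℝ)/2) - 1 : ℝ) = (-(5:ℝ)/2) by norm_num,
      show ((-(1:ℝ)/2) - 1 : ℝ) = (-(3:ℝ)/2) by norm_num]
    module
  have haa : a = a0 := by
    rw [ha, hdcg.deriv_eq, hB.deriv]
  -- projection facts
  have hc0 : c 0 = Q ^ (-(1:ℝ)/2 : ℝ) • y := by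
    rw [hcu 0, hq0]; simp [hu]
  have hhalf : Q ^ (-(1:ℝ)/2 : ℝ) * Q ^ (-(1:ℝ)/2 : ℝ) * Q = 1 := by
    rw [← Real.rpow_add hQ0]
    rw [show (-(1:ℝ)/2 + -(1:ℝ)/2 : ℝ) = -1 by norm_num, Real.rpow_neg_one]
    field_simp
  have hPy : P y = 0 := by
    rw [hP, hc0, real_inner_smul_left, hyy, smul_smul]
    rw [show Q ^ (-(1:ℝ)/2 : ℝ) * Q * Q ^ (-(1:ℝ)/2 : ℝ)
        = Q ^ (-(1:ℝ)/2 : ℝ) * Q ^ (-(1:ℝ)/2 : ℝ) * Q by ring, hhalf, one_smul, sub_self]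
  have hPadd : ∀ v w : E, P (v + w) = P v + P w := by
    intro v w
    simp only [hP, inner_add_right, add_smul]
    abel
  have hPsmul : ∀ (r : ℝ) (v : E), P (r • v) = r • P v := by
    intro r v
    simp only [hP, real_inner_smul_right, smul_sub, smul_smul]
  have hPa : P a = (-2*α*Q^(-(3:ℝ)/2 : ℝ)) • P sd := by
    rw [haa, ha0, hPadd, hPsmul, hPsmul, hPy, smul_zero, zero_add]
  have hcoef : (-2*α*Q^(-(3:ℝ)/2 : ℝ)) = -2 * ⟪s, sd⟫ / (1 + ‖s‖ ^ 2) ^ ((3 : ℝ) / 2) := by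
    rw [eq_div_iff (Real.rpow_pos_of_pos hQ0 _).ne']
    rw [mul_assoc, ← Real.rpow_add hQ0]
    norm_num
    exact hα
  constructor
  · rw [hPa, hcoef]
  · -- norm bound
    have hc0n : ‖c 0‖ = 1 := by
      have h2 : ‖c 0‖ ^ 2 = 1 := by
        rw [← real_inner_self_eq_norm_sq, hc0, real_inner_smul_left,
          real_inner_smul_right, hyy, ← mul_assoc, hhalf]
      calc ‖c 0‖ = Real.sqrt (‖c 0‖ ^ 2) := (Real.sqrt_sq (norm_nonneg _)).symm
        _ = 1 := by rw [h2, Real.sqrt_one]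
    have hPsd : ‖P sd‖ ≤ ‖sd‖ := by
      have hsq : ‖P sd‖ ^ 2 = ‖sd‖ ^ 2 - ⟪c 0, sd⟫ ^ 2 := by
        rw [hP, norm_sub_sq_real, real_inner_smul_right, norm_smul, real_inner_comm]
        rw [hc0n]
        simp [mul_pow, sq_abs]
        ring
      have : ‖P sd‖ ^ 2 ≤ ‖sd‖ ^ 2 := by nlinarith [sq_nonneg ⟪c 0, sd⟫]
      calc ‖P sd‖ = Real.sqrt (‖P sd‖ ^ 2) := (Real.sqrt_sq (norm_nonneg _)).symm
        _ ≤ Real.sqrt (‖sd‖ ^ 2) := Real.sqrt_le_sqrt this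
        _ = ‖sd‖ := Real.sqrt_sq (norm_nonneg _)
    have hαb : |α| ≤ ‖s‖ * ‖sd‖ := abs_real_inner_le_norm s sd
    have hQr : Q ^ (-(3:ℝ)/2 : ℝ) ≤ 1 :=
      Real.rpow_le_one_of_one_le_of_nonpos hQ1 (by norm_num)
    have hQrpos : (0:ℝ) ≤ Q ^ (-(3:ℝ)/2 : ℝ) := Real.rpow_nonneg hQ0.le _
    rw [hPa, norm_smul]
    have h1 : |(-2*α*Q^(-(3:ℝ)/2 : ℝ))| ≤ 2 * ‖s‖ * ‖sd‖ := by
      rw [abs_mul, abs_mul]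
      have : |(-2 : ℝ)| = 2 := by norm_num
      rw [this, abs_of_nonneg hQrpos]
      calc 2 * |α| * Q ^ (-(3:ℝ)/2 : ℝ) ≤ 2 * |α| * 1 := by
            apply mul_le_mul_of_nonneg_left hQr (by positivity)
        _ = 2 * |α| := by ring
        _ ≤ 2 * (‖s‖ * ‖sd‖) := by linarith
        _ = 2 * ‖s‖ * ‖sd‖ := by ring
    calc ‖(-2*α*Q^(-(3:ℝ)/2 : ℝ))‖ * ‖P sd‖
        = |(-2*α*Q^(-(3:ℝ)/2 : ℝ))| * ‖P sd‖ := by rw [Real.norm_eq_abs]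
      _ ≤ (2 * ‖s‖ * ‖sd‖) * ‖sd‖ :=
          mul_le_mul h1 hPsd (norm_nonneg _) (by positivity)
      _ = 2 * ‖s‖ * ‖sd‖ ^ 2 := by ring
end

section
/- Let E be a real inner product space, x ∈ E with ‖x‖ = 1, and s, ṡ ∈ E with ⟨x, s⟩ = ⟨x, ṡ⟩ = 0. Let R(u) = (x+u)/‖x+u‖, let c(t) = R(t·s), and define U : ℝ → E by U(t) = DR(t·s)[ṡ] (the Fréchet derivative of R at t·s applied to ṡ). Then for every t ∈ [0,1], the tangential projection of the derivative of U satisfies ‖U'(t) − ⟨c(t), U'(t)⟩·c(t)‖ ≤ (4√3/9) ‖s‖ ‖ṡ‖, where U'(t) is the ordinary derivative of U as a map from ℝ to E. -/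
open scoped RealInnerProductSpace

lemma fderiv_R_apply {E : Type*} [NormedAddCommGroup E] [InnerProductSpace ℝ E]
    (x u v : E) (hu : x + u ≠ 0) :
    fderiv ℝ (fun w : E => ‖x + w‖⁻¹ • (x + w)) u v
      = ‖x + u‖⁻¹ • v - (⟪x + u, v⟫ / ‖x + u‖ ^ 3) • (x + u) := by
  have hn0 : ‖x + u‖ ≠ 0 := norm_ne_zero_iff.mpr hu
  have hnpos : (0:ℝ) < ‖x + u‖ := norm_pos_iff.mpr hu
  have h1 : HasFDerivAt (fun w : E => x + w) (ContinuousLinearMap.id ℝ E) u :=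
    (hasFDerivAt_id u).const_add x
  have h2 := h1.norm_sq
  have h3 : HasDerivAt Real.sqrt (1 / (2 * Real.sqrt (‖x + u‖ ^ 2))) (‖x + u‖ ^ 2) :=
    Real.hasDerivAt_sqrt (by positivity)
  have h4 := h3.comp_hasFDerivAt u h2
  have h4' : HasFDerivAt (fun w : E => ‖x + w‖)
      ((1 / (2 * Real.sqrt (‖x + u‖ ^ 2))) •
        (2 • (innerSL ℝ (x + u)).comp (ContinuousLinearMap.id ℝ E))) u := by
    simpa [Function.comp_def, Real.sqrt_sq (norm_nonneg _)] using h4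
  have h5 := (hasDerivAt_inv hn0).comp_hasFDerivAt u h4'
  have h5' : HasFDerivAt (fun w : E => ‖x + w‖⁻¹)
      (-(‖x + u‖ ^ 2)⁻¹ • (1 / (2 * Real.sqrt (‖x + u‖ ^ 2))) •
        (2 • (innerSL ℝ (x + u)).comp (ContinuousLinearMap.id ℝ E))) u := by
    simpa [Function.comp_def] using h5
  have h6 : HasFDerivAt (fun w : E => ‖x + w‖⁻¹ • (x + w)) _ u := h5'.smul h1
  rw [h6.fderiv]
  simp only [ContinuousLinearMap.add_apply, ContinuousLinearMap.smul_apply,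
    ContinuousLinearMap.smulRight_apply, ContinuousLinearMap.coe_comp', Function.comp_apply,
    ContinuousLinearMap.coe_id', id_eq, innerSL_apply_apply, ContinuousLinearMap.coe_smul',
    Pi.smul_apply, smul_eq_mul, nsmul_eq_mul, Nat.cast_ofNat, Real.sqrt_sq (norm_nonneg _)]
  match_scalars <;> field_simp <;> ring

set_option maxHeartbeats 1000000 in
/-- Proposition 6.4, property (2) of second-order niceness for the sphere
retraction: with U(t) = DR(ts)[ṡ] along c(t) = R(ts), the tangential
projection of U'(t) has norm at most (4√3/9)‖s‖‖ṡ‖ for t ∈ [0,1]. -/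
theorem stmt_13 {E : Type*} [NormedAddCommGroup E] [InnerProductSpace ℝ E]
    (x s sd : E) (hx : ‖x‖ = 1) (hs : ⟪x, s⟫ = 0) (hsd : ⟪x, sd⟫ = 0)
    (R : E → E) (hR : ∀ u : E, R u = ‖x + u‖⁻¹ • (x + u))
    (c : ℝ → E) (hc : ∀ t : ℝ, c t = R (t • s))
    (U : ℝ → E) (hU : ∀ t : ℝ, U t = fderiv ℝ R (t • s) sd) :
    ∀ t ∈ Set.Icc (0 : ℝ) 1,
      ‖deriv U t - ⟪c t, deriv U t⟫ • c t‖
        ≤ 4 * Real.sqrt 3 / 9 * ‖s‖ * ‖sd‖ := by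
  intro t _
  obtain ⟨a, ha_def⟩ : ∃ a : ℝ, ‖s‖ ^ 2 = a := ⟨_, rfl⟩
  obtain ⟨b, hb_def⟩ : ∃ b : ℝ, ⟪s, sd⟫ = b := ⟨_, rfl⟩
  obtain ⟨c2, hc2_def⟩ : ∃ c2 : ℝ, ‖sd‖ ^ 2 = c2 := ⟨_, rfl⟩
  have ha0 : 0 ≤ a := ha_def ▸ (by positivity)
  have hc20 : 0 ≤ c2 := hc2_def ▸ (by positivity)
  have hs' : ⟪s, x⟫ = 0 := by rw [real_inner_comm]; exact hs
  have hsd' : ⟪sd, x⟫ = 0 := by rw [real_inner_comm]; exact hsd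
  have hxx : ⟪x, x⟫ = (1:ℝ) := by
    rw [real_inner_self_eq_norm_sq, hx]; norm_num
  have hss : ⟪s, s⟫ = a := by rw [real_inner_self_eq_norm_sq, ha_def]
  have hsds : ⟪sd, s⟫ = b := by rw [real_inner_comm]; exact hb_def
  have hq : ∀ r : ℝ, (0:ℝ) < 1 + r ^ 2 * a := fun r => by
    have : (0:ℝ) ≤ r ^ 2 * a := mul_nonneg (sq_nonneg r) ha0
    linarith
  have hg_def : ∃ g : ℝ → ℝ, g = fun r => Real.sqrt (1 + r ^ 2 * a) := ⟨_, rfl⟩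
  obtain ⟨g, hg_def⟩ := hg_def
  have hg2 : ∀ r : ℝ, g r ^ 2 = 1 + r ^ 2 * a := fun r => by rw [hg_def]; exact Real.sq_sqrt (hq r).le
  have hgpos : ∀ r : ℝ, 0 < g r := fun r => by rw [hg_def]; exact Real.sqrt_pos.mpr (hq r)
  have hnorm : ∀ r : ℝ, ‖x + r • s‖ = g r := by
    intro r
    have h2 : ‖x + r • s‖ ^ 2 = 1 + r ^ 2 * a := by
      rw [norm_add_sq_real, hx, real_inner_smul_right, hs, norm_smul]
      rw [← ha_def]
      simp [mul_pow, sq_abs]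
    calc ‖x + r • s‖ = Real.sqrt (‖x + r • s‖ ^ 2) := (Real.sqrt_sq (norm_nonneg _)).symm
      _ = g r := by rw [h2, hg_def]
  have hne : ∀ r : ℝ, x + r • s ≠ 0 := by
    intro r h
    have h2 := hnorm r
    rw [h, norm_zero] at h2
    exact absurd h2.symm (hgpos r).ne'
  have hRf : R = fun w : E => ‖x + w‖⁻¹ • (x + w) := funext hR
  have hUeq : U = fun r : ℝ => (g r)⁻¹ • sd - ((r * b) / (g r) ^ 3) • (x + r • s) := by
    funext r
    rw [hU, hRf, fderiv_R_apply x (r • s) sd (hne r), hnorm]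
    congr 2
    rw [inner_add_left, hsd, real_inner_smul_left, hb_def]
    ring
  -- derivative of g
  have hgd : HasDerivAt g (t * a / g t) t := by
    have hq' : HasDerivAt (fun r : ℝ => 1 + r ^ 2 * a) (2 * t * a) t := by
      have := ((hasDerivAt_pow 2 t).mul_const a).const_add (1:ℝ)
      simpa using this
    have h := (Real.hasDerivAt_sqrt (hq t).ne').comp t hq'
    have h2 : HasDerivAt g (1 / (2 * Real.sqrt (1 + t ^ 2 * a)) * (2 * t * a)) t := by
      rw [hg_def]
      simpa [Function.comp_def] using h
    have heq : 1 / (2 * Real.sqrt (1 + t ^ 2 * a)) * (2 * t * a) = t * a / g t := by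
      rw [hg_def]
      have := (hgpos t).ne'
      rw [hg_def] at this
      field_simp
    rwa [heq] at h2
  obtain ⟨n, hn_def⟩ : ∃ n : ℝ, g t = n := ⟨_, rfl⟩
  have hn2 : n ^ 2 = 1 + t ^ 2 * a := hn_def ▸ hg2 t
  have hnpos : 0 < n := hn_def ▸ hgpos t
  have hn0 : n ≠ 0 := hnpos.ne'
  -- derivative of U
  have hterm1 : HasDerivAt (fun r : ℝ => (g r)⁻¹ • sd)
      ((-(t * a / n) / n ^ 2) • sd) t := by
    have h := (hgd.inv (by rw [hn_def]; exact hn0)).smul_const sd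
    rw [hn_def] at h
    exact h
  have hphi : HasDerivAt (fun r : ℝ => (r * b) / (g r) ^ 3)
      ((b * n ^ 3 - (t * b) * (3 * n ^ 2 * (t * a / n))) / (n ^ 3) ^ 2) t := by
    have hnum : HasDerivAt (fun r : ℝ => r * b) b t := by
      simpa using (hasDerivAt_id t).mul_const b
    have hden : HasDerivAt (fun r : ℝ => (g r) ^ 3) (3 * n ^ 2 * (t * a / n)) t := by
      have h := hgd.pow 3
      rw [hn_def] at h
      rw [show (3 * n ^ 2 * (t * a / n)) = ((3:ℕ):ℝ) * n ^ (3 - 1) * (t * a / n) by norm_num]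
      exact h
    have h := hnum.div hden (show (g t) ^ 3 ≠ 0 by rw [hn_def]; positivity)
    rw [hn_def] at h
    exact h
  have hpsi : HasDerivAt (fun r : ℝ => x + r • s) s t := by
    have := ((hasDerivAt_id t).smul_const s).const_add x
    simpa using this
  have hterm2 := hphi.smul hpsi
  rw [hn_def] at hterm2
  have hD : HasDerivAt U
      (((-(t * a / n) / n ^ 2) • sd) -
        (((b * n ^ 3 - (t * b) * (3 * n ^ 2 * (t * a / n))) / (n ^ 3) ^ 2) • (x + t • s)
          + ((t * b) / n ^ 3) • s)) t := by
    rw [hUeq]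
    exact hterm1.sub (hterm2.congr_deriv (by module))
  have hderiv : deriv U t =
      ((-(t * a / n) / n ^ 2) • sd) -
        (((b * n ^ 3 - (t * b) * (3 * n ^ 2 * (t * a / n))) / (n ^ 3) ^ 2) • (x + t • s)
          + ((t * b) / n ^ 3) • s) := hD.deriv
  have hcteq : c t = n⁻¹ • (x + t • s) := by
    rw [hc, hRf]
    simp only [hnorm t, ← hn_def]
  have hsig : ⟪c t, deriv U t⟫ = t ^ 2 * a * b / n ^ 4 - b / n ^ 2 := by
    rw [hcteq, hderiv]
    simp only [inner_sub_right, inner_add_right, inner_add_left, inner_sub_left,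
      real_inner_smul_left, real_inner_smul_right, hxx, hs, hsd, hs', hsd', hss, hsds,
      hb_def]
    field_simp
    linear_combination (b * (n ^ 2 - 3 * t ^ 2 * a)) * hn2
  have hdd : ⟪sd, sd⟫ = c2 := by rw [real_inner_self_eq_norm_sq]; exact hc2_def
  have hWeq : deriv U t - ⟪c t, deriv U t⟫ • c t
      = (2 * t ^ 2 * a * b / n ^ 5) • x + (2 * t ^ 3 * a * b / n ^ 5 - t * b / n ^ 3) • s
        + (-(t * a / n ^ 3)) • sd := by
    rw [hsig, hderiv, hcteq]
    match_scalars
    all_goals field_simp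
    all_goals try ring
    all_goals tauto
  have hWval : ‖deriv U t - ⟪c t, deriv U t⟫ • c t‖ ^ 2
      = t ^ 2 * a / n ^ 6 * (a * c2 + 3 * b ^ 2) - 4 * t ^ 4 * a ^ 2 * b ^ 2 / n ^ 8 := by
    rw [hWeq, ← real_inner_self_eq_norm_sq]
    simp only [inner_add_left, inner_add_right, real_inner_smul_left, real_inner_smul_right,
      hxx, hs, hsd, hs', hsd', hss, hsds, hdd, hb_def]
    field_simp
    linear_combination (-(4 * t ^ 4 * a ^ 2 * b ^ 2)) * hn2
  have hb2 : b ^ 2 ≤ a * c2 := by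
    calc b ^ 2 = |⟪s, sd⟫| ^ 2 := by rw [sq_abs, hb_def]
      _ ≤ (‖s‖ * ‖sd‖) ^ 2 := pow_le_pow_left₀ (abs_nonneg _) (abs_real_inner_le_norm s sd) 2
      _ = a * c2 := by rw [mul_pow, ha_def, hc2_def]
  have hstep1 : ‖deriv U t - ⟪c t, deriv U t⟫ • c t‖ ^ 2 ≤ t ^ 2 * a / n ^ 6 * (4 * (a * c2)) := by
    rw [hWval]
    have h1 : (0:ℝ) ≤ t ^ 2 * a / n ^ 6 := by positivity
    have h2 : a * c2 + 3 * b ^ 2 ≤ 4 * (a * c2) := by linarith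
    nlinarith [mul_le_mul_of_nonneg_left h2 h1,
      show (0:ℝ) ≤ 4 * t ^ 4 * a ^ 2 * b ^ 2 / n ^ 8 by positivity]
  have hn6 : n ^ 6 = (1 + t ^ 2 * a) ^ 3 := by rw [← hn2]; ring
  have hpoly : 27 * (t ^ 2 * a) ≤ 4 * (1 + t ^ 2 * a) ^ 3 := by
    nlinarith [mul_nonneg (sq_nonneg (2 * t ^ 2 * a - 1))
      (show (0:ℝ) ≤ t ^ 2 * a + 4 by nlinarith [mul_nonneg (sq_nonneg t) ha0])]
  have hstep2 : t ^ 2 * a / n ^ 6 * (4 * (a * c2)) ≤ 16 / 27 * (a * c2) := by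
    rw [div_mul_eq_mul_div, div_le_iff₀ (by positivity : (0:ℝ) < n ^ 6), hn6]
    nlinarith [mul_le_mul_of_nonneg_left hpoly (mul_nonneg ha0 hc20)]
  have hfin2 : ‖deriv U t - ⟪c t, deriv U t⟫ • c t‖ ^ 2 ≤ 16 / 27 * (a * c2) :=
    le_trans hstep1 hstep2
  have hB : (0:ℝ) ≤ 4 * Real.sqrt 3 / 9 * ‖s‖ * ‖sd‖ := by positivity
  have hBsq : (4 * Real.sqrt 3 / 9 * ‖s‖ * ‖sd‖) ^ 2 = 16 / 27 * (a * c2) := by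
    have h3 : Real.sqrt 3 ^ 2 = 3 := Real.sq_sqrt (by norm_num)
    rw [← ha_def, ← hc2_def]
    linear_combination (16 / 81 * ‖s‖ ^ 2 * ‖sd‖ ^ 2) * h3
  calc ‖deriv U t - ⟪c t, deriv U t⟫ • c t‖
      = Real.sqrt (‖deriv U t - ⟪c t, deriv U t⟫ • c t‖ ^ 2) :=
        (Real.sqrt_sq (norm_nonneg _)).symm
    _ ≤ Real.sqrt ((4 * Real.sqrt 3 / 9 * ‖s‖ * ‖sd‖) ^ 2) :=
        Real.sqrt_le_sqrt (by rw [hBsq]; exact hfin2)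
    _ = 4 * Real.sqrt 3 / 9 * ‖s‖ * ‖sd‖ := Real.sqrt_sq hB
end

section
/- Let f_low ∈ ℝ, η₁ > 0, ς_min > 0, C > 0 and ε > 0. Let (φ_k)_{k∈ℕ} be reals with φ_k ≥ f_low for all k, let (t_k)_{k∈ℕ} and (g_k)_{k∈ℕ} be nonnegative reals, and let S ⊆ ℕ be such that: for every k ∈ S, φ_k − φ_{k+1} ≥ (η₁ ς_min/3)·t_k³ and g_{k+1} ≤ C·t_k², and for every k ∉ S, φ_{k+1} = φ_k. Then the set {k ∈ S : g_{k+1} > ε} is finite and has cardinality at most (3(φ_0 − f_low)/(η₁ ς_min)) · C^{3/2} / ε^{3/2}. -/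
/-- Theorem 3.1 (counting argument): successful iterations with
g_{k+1} > ε number at most (3(φ₀ − f_low)/(η₁ ς_min)) C^{3/2} / ε^{3/2}. -/
theorem stmt_15 (f_low η₁ ς_min C ε : ℝ) (hη₁ : 0 < η₁) (hς : 0 < ς_min)
    (hC : 0 < C) (hε : 0 < ε)
    (φ t g : ℕ → ℝ) (hφ : ∀ k, f_low ≤ φ k) (ht : ∀ k, 0 ≤ t k)
    (hg : ∀ k, 0 ≤ g k)
    (S : Set ℕ)
    (hdec : ∀ k ∈ S, η₁ * ς_min / 3 * (t k) ^ 3 ≤ φ k - φ (k + 1))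
    (hgrad : ∀ k ∈ S, g (k + 1) ≤ C * (t k) ^ 2)
    (hfail : ∀ k ∉ S, φ (k + 1) = φ k) :
    {k ∈ S | ε < g (k + 1)}.Finite ∧
      ({k ∈ S | ε < g (k + 1)}.ncard : ℝ)
        ≤ 3 * (φ 0 - f_low) / (η₁ * ς_min) * C ^ ((3 : ℝ) / 2) / ε ^ ((3 : ℝ) / 2) := by
  have hφ0 : 0 ≤ φ 0 - f_low := by linarith [hφ 0]
  have hεC : 0 < ε / C := div_pos hε hC
  set B := {k ∈ S | ε < g (k + 1)} with hBdef
  set δ : ℝ := η₁ * ς_min / 3 * (Real.sqrt (ε / C)) ^ 3 with hδ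
  have hδpos : 0 < δ := by
    apply mul_pos (by positivity)
    exact pow_pos (Real.sqrt_pos.mpr hεC) 3
  -- each bad successful step decreases φ by at least δ
  have hdrop : ∀ k ∈ B, δ ≤ φ k - φ (k + 1) := by
    intro k hk
    obtain ⟨hkS, hkg⟩ := hk
    have h1 : ε / C < (t k) ^ 2 := by
      rw [div_lt_iff₀ hC]
      have := hgrad k hkS
      linarith [mul_comm C ((t k) ^ 2)]
    have h2 : Real.sqrt (ε / C) ≤ t k := by
      have := Real.sqrt_le_sqrt h1.le
      rwa [Real.sqrt_sq (ht k)] at this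
    have h3 : (Real.sqrt (ε / C)) ^ 3 ≤ (t k) ^ 3 :=
      pow_le_pow_left₀ (Real.sqrt_nonneg _) h2 3
    have h4 := hdec k hkS
    have h5 : 0 < η₁ * ς_min / 3 := by positivity
    nlinarith
  -- φ is nonincreasing stepwise
  have hstep : ∀ k, 0 ≤ φ k - φ (k + 1) := by
    intro k
    by_cases hk : k ∈ S
    · have := hdec k hk
      have h0 : 0 ≤ η₁ * ς_min / 3 * (t k) ^ 3 :=
        mul_nonneg (by positivity) (pow_nonneg (ht k) 3)
      linarith
    · linarith [hfail k hk]
  -- key counting bound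
  have key : ∀ F : Finset ℕ, ↑F ⊆ B → (F.card : ℝ) * δ ≤ φ 0 - f_low := by
    intro F hF
    set n := F.sup id + 1 with hn
    have hFr : F ⊆ Finset.range n := fun k hk =>
      Finset.mem_range.mpr (Nat.lt_succ_of_le (Finset.le_sup (f := id) hk))
    have h1 : (F.card : ℝ) * δ ≤ ∑ k ∈ F, (φ k - φ (k + 1)) := by
      calc (F.card : ℝ) * δ = ∑ _k ∈ F, δ := by rw [Finset.sum_const, nsmul_eq_mul]
        _ ≤ ∑ k ∈ F, (φ k - φ (k + 1)) :=
            Finset.sum_le_sum fun k hk => hdrop k (hF hk)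
    have h2 : ∑ k ∈ F, (φ k - φ (k + 1)) ≤ ∑ k ∈ Finset.range n, (φ k - φ (k + 1)) :=
      Finset.sum_le_sum_of_subset_of_nonneg hFr fun k _ _ => hstep k
    have h3 : ∑ k ∈ Finset.range n, (φ k - φ (k + 1)) = φ 0 - φ n :=
      Finset.sum_range_sub' φ n
    have := hφ n
    linarith
  -- finiteness
  have hfin : B.Finite := by
    by_contra hinf
    have hinf : B.Infinite := hinf
    obtain ⟨F, hFB, hcard⟩ :=
      hinf.exists_subset_card_eq (Nat.ceil ((φ 0 - f_low) / δ) + 1)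
    have hk := key F hFB
    rw [hcard] at hk
    have h1 : ((Nat.ceil ((φ 0 - f_low) / δ) + 1 : ℕ) : ℝ) ≤ (φ 0 - f_low) / δ := by
      exact (le_div_iff₀ hδpos).mpr hk
    have h2 := Nat.le_ceil ((φ 0 - f_low) / δ)
    push_cast at h1
    linarith
  refine ⟨hfin, ?_⟩
  have hkey := key hfin.toFinset (by simp)
  rw [← Set.ncard_eq_toFinset_card B hfin] at hkey
  have hle : (B.ncard : ℝ) ≤ (φ 0 - f_low) / δ := by
    exact (le_div_iff₀ hδpos).mpr hkey
  have hsq : (Real.sqrt (ε / C)) ^ 3 = ε ^ ((3 : ℝ) / 2) / C ^ ((3 : ℝ) / 2) := by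
    rw [Real.sqrt_eq_rpow, ← Real.rpow_natCast ((ε / C) ^ ((1 : ℝ) / 2)) 3,
      ← Real.rpow_mul hεC.le, Real.div_rpow hε.le hC.le]
    norm_num
  have hEq : (φ 0 - f_low) / δ
      = 3 * (φ 0 - f_low) / (η₁ * ς_min) * C ^ ((3 : ℝ) / 2) / ε ^ ((3 : ℝ) / 2) := by
    rw [hδ, hsq]
    have hCp : C ^ ((3 : ℝ) / 2) ≠ 0 := (Real.rpow_pos_of_pos hC _).ne'
    have hEp : ε ^ ((3 : ℝ) / 2) ≠ 0 := (Real.rpow_pos_of_pos hε _).ne'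
    field_simp
  rw [← hEq]
  exact hle
end

section
/- Let f_low ∈ ℝ, η₁ > 0, ς_min > 0, C > 0, ε > 0, a > 0 and b ∈ (0,1]. Let q : ℝ → ℝ be nondecreasing with q(0) = 0 and q(u) ≥ 0 for u ≥ 0. Let (φ_k)_{k∈ℕ} be reals with φ_k ≥ f_low for all k, let (t_k), (g_k), (σ_k) be nonnegative reals, and let S ⊆ ℕ be such that: for every k ∈ S, φ_k − φ_{k+1} ≥ (η₁ ς_min/3)·t_k³ and (σ_k − q(t_k))·g_{k+1} ≤ C·t_k², and moreover σ_k ≥ b whenever k ∈ S and t_k ≤ a; and for every k ∉ S, φ_{k+1} = φ_k. Then for every r ∈ (0, a] with q(r) < b, the set {k ∈ S : g_{k+1} > ε} is finite and has cardinality at most (3(φ_0 − f_low)/(η₁ ς_min)) · max( (C/((b − q(r))·ε))^{3/2}, 1/r³ ). -/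
/-- Theorem 4.1 (short-step/long-step counting argument for general
retractions). -/
theorem stmt_16 (f_low η₁ ς_min C ε a b : ℝ) (hη₁ : 0 < η₁) (hς : 0 < ς_min)
    (hC : 0 < C) (hε : 0 < ε) (ha : 0 < a) (hb0 : 0 < b) (hb1 : b ≤ 1)
    (q : ℝ → ℝ) (hqmono : Monotone q) (hq0 : q 0 = 0)
    (hqnonneg : ∀ u : ℝ, 0 ≤ u → 0 ≤ q u)
    (φ t g σ : ℕ → ℝ) (hφ : ∀ k, f_low ≤ φ k) (ht : ∀ k, 0 ≤ t k)
    (hg : ∀ k, 0 ≤ g k) (hσ : ∀ k, 0 ≤ σ k)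
    (S : Set ℕ)
    (hdec : ∀ k ∈ S, η₁ * ς_min / 3 * (t k) ^ 3 ≤ φ k - φ (k + 1))
    (hgrad : ∀ k ∈ S, (σ k - q (t k)) * g (k + 1) ≤ C * (t k) ^ 2)
    (hσb : ∀ k ∈ S, t k ≤ a → b ≤ σ k)
    (hfail : ∀ k ∉ S, φ (k + 1) = φ k) :
    ∀ r : ℝ, 0 < r → r ≤ a → q r < b →
      {k ∈ S | ε < g (k + 1)}.Finite ∧
        ({k ∈ S | ε < g (k + 1)}.ncard : ℝ)
          ≤ 3 * (φ 0 - f_low) / (η₁ * ς_min)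
            * max ((C / ((b - q r) * ε)) ^ ((3 : ℝ) / 2)) (1 / r ^ 3) := by
  classical
  intro r hr hra hqr
  set A : ℝ := (b - q r) * ε with hAdef
  have hA : 0 < A := mul_pos (by linarith) hε
  set m : ℝ := min ((A / C) ^ ((3 : ℝ) / 2)) (r ^ 3) with hmdef
  have hm : 0 < m := lt_min (Real.rpow_pos_of_pos (div_pos hA hC) _) (by positivity)
  -- step 1: lower bound on step size on bad iterations
  have key : ∀ k ∈ S, ε < g (k + 1) → m ≤ (t k) ^ 3 := by
    intro k hkS hkg
    rcases le_or_gt (t k) r with hle | hlt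
    · -- short step
      have hσk : b ≤ σ k := hσb k hkS (hle.trans hra)
      have hq : q (t k) ≤ q r := hqmono hle
      have h1 : A ≤ (σ k - q (t k)) * g (k + 1) := by
        apply mul_le_mul (by linarith) hkg.le hε.le (by linarith)
      have h2 : A ≤ C * (t k) ^ 2 := h1.trans (hgrad k hkS)
      have h3 : A / C ≤ (t k) ^ 2 := (div_le_iff₀' hC).mpr h2
      have h4 : (A / C) ^ ((3 : ℝ) / 2) ≤ ((t k) ^ 2) ^ ((3 : ℝ) / 2) :=
        Real.rpow_le_rpow (le_of_lt (div_pos hA hC)) h3 (by norm_num)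
      have h5 : ((t k) ^ 2 : ℝ) ^ ((3 : ℝ) / 2) = (t k) ^ 3 := by
        rw [← Real.rpow_natCast (t k) 3, ← Real.rpow_natCast (t k) 2,
          ← Real.rpow_mul (ht k)]
        norm_num
      calc m ≤ (A / C) ^ ((3 : ℝ) / 2) := min_le_left _ _
        _ ≤ (t k) ^ 3 := h5 ▸ h4
    · calc m ≤ r ^ 3 := min_le_right _ _
        _ ≤ (t k) ^ 3 := pow_le_pow_left₀ hr.le hlt.le 3
  set δ : ℝ := η₁ * ς_min / 3 * m with hδdef
  have hδ : 0 < δ := by positivity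
  have key2 : ∀ k ∈ S, ε < g (k + 1) → δ ≤ φ k - φ (k + 1) := by
    intro k hkS hkg
    have := mul_le_mul_of_nonneg_left (key k hkS hkg) (by positivity : (0:ℝ) ≤ η₁ * ς_min / 3)
    exact this.trans (hdec k hkS)
  have hmono : ∀ k, φ (k + 1) ≤ φ k := by
    intro k
    by_cases hk : k ∈ S
    · have := hdec k hk
      nlinarith [pow_nonneg (ht k) 3]
    · exact (hfail k hk).le
  -- counting
  have count : ∀ n : ℕ,
      δ * ((Finset.range n).filter (fun k => k ∈ S ∧ ε < g (k + 1))).card ≤ φ 0 - φ n := by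
    intro n
    induction n with
    | zero => simp
    | succ n ih =>
      rw [Finset.range_add_one, Finset.filter_insert]
      by_cases hn : n ∈ S ∧ ε < g (n + 1)
      · rw [if_pos hn, Finset.card_insert_of_notMem (by simp)]
        have := key2 n hn.1 hn.2
        push_cast
        nlinarith
      · rw [if_neg hn]
        have := hmono n
        linarith
  have bound : ∀ n : ℕ,
      (((Finset.range n).filter (fun k => k ∈ S ∧ ε < g (k + 1))).card : ℝ)
        ≤ (φ 0 - f_low) / δ := by
    intro n
    rw [le_div_iff₀ hδ]
    have := count n
    have := hφ n
    linarith [mul_comm δ (((Finset.range n).filter (fun k => k ∈ S ∧ ε < g (k + 1))).card : ℝ)]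
  set Bad : Set ℕ := {k ∈ S | ε < g (k + 1)} with hBad
  have subfin : ∀ F : Finset ℕ, ↑F ⊆ Bad → (F.card : ℝ) ≤ (φ 0 - f_low) / δ := by
    intro F hF
    have hsub : F ⊆ (Finset.range (F.sup id + 1)).filter (fun k => k ∈ S ∧ ε < g (k + 1)) := by
      intro k hk
      have hkB : k ∈ Bad := hF hk
      simp only [Finset.mem_filter, Finset.mem_range]
      exact ⟨Nat.lt_succ_of_le (Finset.le_sup (f := id) hk), hkB.1, hkB.2⟩
    calc (F.card : ℝ) ≤ _ := Nat.cast_le.mpr (Finset.card_le_card hsub)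
      _ ≤ (φ 0 - f_low) / δ := bound _
  have hfin : Bad.Finite := by
    by_contra hinf
    replace hinf : Bad.Infinite := hinf
    obtain ⟨F, hFsub, hFcard⟩ := hinf.exists_subset_card_eq (⌈(φ 0 - f_low) / δ⌉₊ + 1)
    have := subfin F hFsub
    rw [hFcard] at this
    push_cast at this
    have h2 : (φ 0 - f_low) / δ ≤ (⌈(φ 0 - f_low) / δ⌉₊ : ℝ) := Nat.le_ceil _
    linarith
  refine ⟨hfin, ?_⟩
  have hcard : (Bad.ncard : ℝ) ≤ (φ 0 - f_low) / δ := by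
    rw [Set.ncard_eq_toFinset_card Bad hfin]
    exact subfin hfin.toFinset (by simp)
  have hmax : max ((C / A) ^ ((3 : ℝ) / 2)) (1 / r ^ 3) = 1 / m := by
    rw [hmdef]
    have h1 : (C / A) ^ ((3 : ℝ) / 2) = 1 / (A / C) ^ ((3 : ℝ) / 2) := by
      rw [one_div, ← Real.inv_rpow (le_of_lt (div_pos hA hC))]
      congr 1
      field_simp
    rw [h1]
    rcases min_cases ((A / C) ^ ((3 : ℝ) / 2)) (r ^ 3) with ⟨he, hle⟩ | ⟨he, hle⟩
    · rw [he, max_eq_left]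
      apply one_div_le_one_div_of_le (Real.rpow_pos_of_pos (div_pos hA hC) _) hle
    · rw [he, max_eq_right]
      exact one_div_le_one_div_of_le (by positivity) hle.le
  rw [hmax]
  have : (φ 0 - f_low) / δ = 3 * (φ 0 - f_low) / (η₁ * ς_min) * (1 / m) := by
    rw [hδdef]; field_simp
  linarith [hcard, this ▸ hcard]
end

section
/- Let f_low ∈ ℝ, η₁ > 0, ς_min > 0, D > 0 and ε > 0. Let (φ_k)_{k∈ℕ} be reals with φ_k ≥ f_low for all k, let (t_k)_{k∈ℕ} be nonnegative reals, let (λ_k)_{k∈ℕ} be reals, and let S ⊆ ℕ be such that: for every k ∈ S, φ_k − φ_{k+1} ≥ (η₁ ς_min/3)·t_k³ and −λ_k ≤ D·t_k, and for every k ∉ S, φ_{k+1} = φ_k. Then the set {k ∈ S : λ_k < −ε} is finite and has cardinality at most (3(φ_0 − f_low)/(η₁ ς_min)) · D³ / ε³. -/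
/-- Theorem 5.1 (counting argument): successful iterations with
λ_k < −ε number at most (3(φ₀ − f_low)/(η₁ ς_min)) D³/ε³. -/
theorem stmt_17 (f_low η₁ ς_min D ε : ℝ) (hη₁ : 0 < η₁) (hς : 0 < ς_min)
    (hD : 0 < D) (hε : 0 < ε)
    (φ t lam : ℕ → ℝ) (hφ : ∀ k, f_low ≤ φ k) (ht : ∀ k, 0 ≤ t k)
    (S : Set ℕ)
    (hdec : ∀ k ∈ S, η₁ * ς_min / 3 * (t k) ^ 3 ≤ φ k - φ (k + 1))
    (hlam : ∀ k ∈ S, -lam k ≤ D * t k)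
    (hfail : ∀ k ∉ S, φ (k + 1) = φ k) :
    {k ∈ S | lam k < -ε}.Finite ∧
      ({k ∈ S | lam k < -ε}.ncard : ℝ)
        ≤ 3 * (φ 0 - f_low) / (η₁ * ς_min) * D ^ 3 / ε ^ 3 := by
  classical
  set c : ℝ := η₁ * ς_min / 3 * (ε / D) ^ 3 with hc
  have hcpos : 0 < c := by positivity
  set B : Set ℕ := {k ∈ S | lam k < -ε} with hB
  have hmono : ∀ k, φ (k + 1) ≤ φ k := by
    intro k
    by_cases hk : k ∈ S
    · have h1 := hdec k hk
      have h2 : 0 ≤ η₁ * ς_min / 3 * (t k) ^ 3 :=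
        mul_nonneg (by positivity) (pow_nonneg (ht k) 3)
      linarith
    · rw [hfail k hk]
  have hstep : ∀ k ∈ B, c ≤ φ k - φ (k + 1) := by
    intro k hk
    obtain ⟨hkS, hklam⟩ := hk
    have h1 : ε < D * t k := lt_of_lt_of_le (by linarith) (hlam k hkS)
    have h2 : ε / D ≤ t k := (div_le_iff₀ hD).2 (by linarith)
    have h3 : (ε / D) ^ 3 ≤ (t k) ^ 3 :=
      pow_le_pow_left₀ (by positivity) h2 3
    have h4 : c ≤ η₁ * ς_min / 3 * (t k) ^ 3 :=
      mul_le_mul_of_nonneg_left h3 (by positivity)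
    linarith [hdec k hkS]
  have hcount : ∀ n, c * (((Finset.range n).filter (· ∈ B)).card : ℝ) ≤ φ 0 - φ n := by
    intro n
    induction n with
    | zero => simp
    | succ n ih =>
      rw [Finset.range_add_one, Finset.filter_insert]
      by_cases hn : n ∈ B
      · rw [if_pos hn, Finset.card_insert_of_notMem (by simp)]
        push_cast
        have h5 := hstep n hn
        nlinarith
      · rw [if_neg hn]
        have := hmono n
        linarith
  have hbound : ∀ n, c * (((Finset.range n).filter (· ∈ B)).card : ℝ) ≤ φ 0 - f_low :=
    fun n => (hcount n).trans (by linarith [hφ n])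
  have hfin : B.Finite := by
    by_contra hinf
    have hi : B.Infinite := hinf
    obtain ⟨F, hFB, hFcard⟩ :=
      hi.exists_subset_card_eq (Nat.ceil ((φ 0 - f_low) / c) + 1)
    have hFsub : F ⊆ (Finset.range (F.sup id + 1)).filter (· ∈ B) := fun x hx =>
      Finset.mem_filter.2
        ⟨Finset.mem_range.2 (Nat.lt_succ_of_le (Finset.le_sup (f := id) hx)), hFB hx⟩
    have hcard := Finset.card_le_card hFsub
    have hb := hbound (F.sup id + 1)
    have h6 : (F.card : ℝ) ≤ (φ 0 - f_low) / c := by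
      rw [le_div_iff₀ hcpos]
      calc (F.card : ℝ) * c = c * F.card := by ring
        _ ≤ c * (((Finset.range (F.sup id + 1)).filter (· ∈ B)).card : ℝ) := by
            apply mul_le_mul_of_nonneg_left _ hcpos.le
            exact_mod_cast hcard
        _ ≤ φ 0 - f_low := hb
    have h7 : (φ 0 - f_low) / c ≤ Nat.ceil ((φ 0 - f_low) / c) := Nat.le_ceil _
    rw [hFcard] at h6
    push_cast at h6
    linarith
  refine ⟨hfin, ?_⟩
  have hsub : hfin.toFinset ⊆
      (Finset.range (hfin.toFinset.sup id + 1)).filter (· ∈ B) := fun x hx =>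
    Finset.mem_filter.2
      ⟨Finset.mem_range.2 (Nat.lt_succ_of_le (Finset.le_sup (f := id) hx)),
        (Set.Finite.mem_toFinset hfin).1 hx⟩
  have hcard := Finset.card_le_card hsub
  have hb := hbound (hfin.toFinset.sup id + 1)
  have h6 : c * (B.ncard : ℝ) ≤ φ 0 - f_low := by
    rw [Set.ncard_eq_toFinset_card _ hfin]
    exact le_trans (mul_le_mul_of_nonneg_left (by exact_mod_cast hcard) hcpos.le) hb
  have h7 : (B.ncard : ℝ) ≤ (φ 0 - f_low) / c := by
    rw [le_div_iff₀ hcpos]; linarith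
  have heq : (φ 0 - f_low) / c = 3 * (φ 0 - f_low) / (η₁ * ς_min) * D ^ 3 / ε ^ 3 := by
    rw [hc]; field_simp
  linarith
end

section
/- Let f_low ∈ ℝ, η₁ > 0, ς_min > 0, C > 0, ε > 0, 0 < γ₁ < 1 < γ₂, ς_0 > 0 and ς_max ≥ ς_0. Let (φ_k)_{k∈ℕ} be reals with φ_k ≥ f_low for all k, let (t_k), (g_k) be nonnegative reals, let (ς_k)_{k∈ℕ} be positive reals starting at ς_0 with ς_k ≤ ς_max for all k, and let S ⊆ ℕ be such that: for every k ∈ S, φ_k − φ_{k+1} ≥ (η₁ ς_min/3)·t_k³, g_{k+1} ≤ C·t_k², and ς_{k+1} ≥ γ₁ ς_k; and for every k ∉ S, φ_{k+1} = φ_k and ς_{k+1} ≥ γ₂ ς_k. Set K₁ = (3(φ_0 − f_low)/(η₁ ς_min)) · C^{3/2}/ε^{3/2}. Then for every natural number k̄ with k̄ > (1 + |log γ₁|/log γ₂)·K₁ + (1/log γ₂)·log(ς_max/ς_0), there exists k ≤ k̄ with g_k ≤ ε. -/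
/-- Corollary 3.1 (total iteration complexity): ARC produces a point with
gradient norm at most ε within
(1 + |log γ₁|/log γ₂)·K₁(ε) + log(ς_max/ς₀)/log γ₂ + 1 iterations. -/
theorem stmt_18 (f_low η₁ ς_min C ε γ₁ γ₂ ς₀ ςmax : ℝ)
    (hη₁ : 0 < η₁) (hς : 0 < ς_min) (hC : 0 < C) (hε : 0 < ε)
    (hγ₁ : 0 < γ₁) (hγ₁' : γ₁ < 1) (hγ₂ : 1 < γ₂)
    (hς₀ : 0 < ς₀) (hςmax : ς₀ ≤ ςmax)
    (φ t g : ℕ → ℝ) (hφ : ∀ k, f_low ≤ φ k) (ht : ∀ k, 0 ≤ t k)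
    (hg : ∀ k, 0 ≤ g k)
    (ς : ℕ → ℝ) (hstart : ς 0 = ς₀) (hpos : ∀ k, 0 < ς k)
    (hcap : ∀ k, ς k ≤ ςmax)
    (S : Set ℕ)
    (hdec : ∀ k ∈ S, η₁ * ς_min / 3 * (t k) ^ 3 ≤ φ k - φ (k + 1))
    (hgrad : ∀ k ∈ S, g (k + 1) ≤ C * (t k) ^ 2)
    (hsucc : ∀ k ∈ S, γ₁ * ς k ≤ ς (k + 1))
    (hfail : ∀ k ∉ S, φ (k + 1) = φ k ∧ γ₂ * ς k ≤ ς (k + 1))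
    (K₁ : ℝ)
    (hK₁ : K₁ = 3 * (φ 0 - f_low) / (η₁ * ς_min) * C ^ ((3 : ℝ) / 2) / ε ^ ((3 : ℝ) / 2)) :
    ∀ kbar : ℕ,
      (1 + |Real.log γ₁| / Real.log γ₂) * K₁
          + 1 / Real.log γ₂ * Real.log (ςmax / ς₀) < (kbar : ℝ) →
        ∃ k ≤ kbar, g k ≤ ε := by
  intro kbar hkbar
  by_contra hcon
  push_neg at hcon
  classical
  set c : ℝ := η₁ * ς_min / 3 with hc
  have hcpos : 0 < c := by positivity
  set δ : ℝ := c * (ε / C) ^ ((3:ℝ)/2) with hδ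
  have hδpos : 0 < δ := by positivity
  set N : ℕ := ((Finset.range kbar).filter (fun k => k ∈ S)).card with hN
  set M : ℕ := ((Finset.range kbar).filter (fun k => ¬ k ∈ S)).card with hM
  have hNM : N + M = kbar := by
    rw [hN, hM, Finset.card_filter_add_card_filter_not, Finset.card_range]
  -- per-step decrease on successful iterations
  have key : ∀ k ∈ Finset.range kbar, k ∈ S → δ ≤ φ k - φ (k+1) := by
    intro k hk hkS
    have hk' : k + 1 ≤ kbar := Finset.mem_range.mp hk
    have h1 : ε < C * t k ^ 2 := lt_of_lt_of_le (hcon (k+1) hk') (hgrad k hkS)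
    have h2 : ε / C ≤ t k ^ 2 := by
      rw [div_le_iff₀ hC]; nlinarith
    have h3 : (ε / C) ^ ((3:ℝ)/2) ≤ (t k ^ 2 : ℝ) ^ ((3:ℝ)/2) :=
      Real.rpow_le_rpow (by positivity) h2 (by norm_num)
    have h4 : (t k ^ 2 : ℝ) ^ ((3:ℝ)/2) = t k ^ 3 := by
      rw [← Real.rpow_natCast (t k) 2, ← Real.rpow_mul (ht k), ← Real.rpow_natCast (t k) 3]
      norm_num
    have h5 := hdec k hkS
    rw [h4] at h3
    have : c * (ε / C) ^ ((3:ℝ)/2) ≤ c * t k ^ 3 :=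
      mul_le_mul_of_nonneg_left h3 hcpos.le
    rw [hδ]; rw [hc] at *; linarith
  have tel : ∑ k ∈ Finset.range kbar, (φ k - φ (k+1)) = φ 0 - φ kbar :=
    Finset.sum_range_sub' φ kbar
  have hsum : (N:ℝ) * δ ≤ φ 0 - φ kbar := by
    rw [← tel, ← Finset.sum_filter_add_sum_filter_not (Finset.range kbar) (fun k => k ∈ S)]
    have h0 : ∑ k ∈ (Finset.range kbar).filter (fun k => ¬ k ∈ S), (φ k - φ (k+1)) = 0 :=
      Finset.sum_eq_zero (fun k hk => by
        have := (hfail k (Finset.mem_filter.mp hk).2).1; linarith)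
    have h1 : (N:ℝ) * δ ≤ ∑ k ∈ (Finset.range kbar).filter (fun k => k ∈ S), (φ k - φ (k+1)) := by
      calc (N:ℝ) * δ = ∑ _k ∈ (Finset.range kbar).filter (fun k => k ∈ S), δ := by
            rw [Finset.sum_const, nsmul_eq_mul]
        _ ≤ _ := Finset.sum_le_sum (fun k hk =>
            key k (Finset.mem_filter.mp hk).1 (Finset.mem_filter.mp hk).2)
    linarith
  -- N ≤ K₁
  have hKδ : K₁ * δ = φ 0 - f_low := by
    rw [hK₁, hδ, hc, Real.div_rpow hε.le hC.le]
    have e1 : (0:ℝ) < C ^ ((3:ℝ)/2) := Real.rpow_pos_of_pos hC _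
    have e2 : (0:ℝ) < ε ^ ((3:ℝ)/2) := Real.rpow_pos_of_pos hε _
    field_simp
  have hNK : (N:ℝ) ≤ K₁ := by
    have h2 : (N:ℝ) * δ ≤ K₁ * δ := by rw [hKδ]; linarith [hφ kbar]
    exact le_of_mul_le_mul_right h2 hδpos
  -- regularization parameter growth
  set L1 : ℝ := Real.log γ₁ with hL1def
  set L2 : ℝ := Real.log γ₂ with hL2def
  have hL2 : 0 < L2 := Real.log_pos hγ₂
  have hL1 : L1 < 0 := Real.log_neg hγ₁ hγ₁'
  have grow : ∀ n, Real.log ς₀ + ∑ k ∈ Finset.range n, (if k ∈ S then L1 else L2)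
      ≤ Real.log (ς n) := by
    intro n
    induction n with
    | zero => simp [hstart]
    | succ n ih =>
      rw [Finset.sum_range_succ]
      have step : Real.log (ς n) + (if n ∈ S then L1 else L2) ≤ Real.log (ς (n+1)) := by
        by_cases hn : n ∈ S
        · simp only [hn, if_true]
          have h := hsucc n hn
          have h2 : Real.log (γ₁ * ς n) ≤ Real.log (ς (n+1)) :=
            Real.log_le_log (mul_pos hγ₁ (hpos n)) h
          rw [Real.log_mul (ne_of_gt hγ₁) (ne_of_gt (hpos n))] at h2
          rw [hL1def]; linarith
        · simp only [hn, if_false]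
          have h := (hfail n hn).2
          have h2 : Real.log (γ₂ * ς n) ≤ Real.log (ς (n+1)) :=
            Real.log_le_log (mul_pos (lt_trans zero_lt_one hγ₂) (hpos n)) h
          rw [Real.log_mul (by positivity) (ne_of_gt (hpos n))] at h2
          rw [hL2def]; linarith
      linarith
  have hsplit : ∑ k ∈ Finset.range kbar, (if k ∈ S then L1 else L2)
      = (N:ℝ) * L1 + (M:ℝ) * L2 := by
    rw [Finset.sum_ite, Finset.sum_const, Finset.sum_const, nsmul_eq_mul, nsmul_eq_mul]
  have hlog : Real.log ς₀ + ((N:ℝ) * L1 + (M:ℝ) * L2) ≤ Real.log ςmax := by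
    have := grow kbar
    rw [hsplit] at this
    exact this.trans (Real.log_le_log (hpos kbar) (hcap kbar))
  -- final arithmetic
  have hD : Real.log (ςmax / ς₀) = Real.log ςmax - Real.log ς₀ :=
    Real.log_div (ne_of_gt (lt_of_lt_of_le hς₀ hςmax)) (ne_of_gt hς₀)
  have hA : |L1| = -L1 := abs_of_neg hL1
  rw [hA, hD] at hkbar
  have hk' : ((kbar:ℕ):ℝ) = (N:ℝ) + (M:ℝ) := by
    rw [← hNM]; push_cast; ring
  rw [hk'] at hkbar
  have hmul := mul_lt_mul_of_pos_right hkbar hL2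
  have hlhs : ((1 + -L1 / L2) * K₁ + 1 / L2 * (Real.log ςmax - Real.log ς₀)) * L2
      = (L2 - L1) * K₁ + (Real.log ςmax - Real.log ς₀) := by
    field_simp
    ring_nf
    try tauto
  rw [hlhs] at hmul
  nlinarith [mul_le_mul_of_nonneg_right hNK hL2.le,
    mul_le_mul_of_nonneg_right hNK (neg_nonneg.mpr hL1.le)]
end

section
/- Let γ₂ > 1 and ς_max > 0. Let (g_k)_{k∈ℕ} be nonnegative reals, let (ς_k)_{k∈ℕ} be positive reals with ς_k ≤ ς_max for all k, and let S ⊆ ℕ be such that: for every k ∉ S, g_{k+1} = g_k and ς_{k+1} ≥ γ₂ ς_k; and for every ε > 0 the set {k ∈ S : g_{k+1} > ε} is finite. Then g_k → 0 as k → ∞. -/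
/-- End of Theorem 3.1 (Appendix B): the gradient norms tend to zero. -/
theorem stmt_19 (γ₂ ςmax : ℝ) (hγ₂ : 1 < γ₂) (hςmax : 0 < ςmax)
    (g ς : ℕ → ℝ) (hg : ∀ k, 0 ≤ g k) (hςpos : ∀ k, 0 < ς k)
    (hcap : ∀ k, ς k ≤ ςmax)
    (S : Set ℕ)
    (hfail : ∀ k ∉ S, g (k + 1) = g k ∧ γ₂ * ς k ≤ ς (k + 1))
    (hfin : ∀ ε : ℝ, 0 < ε → {k ∈ S | ε < g (k + 1)}.Finite) :
    Filter.Tendsto g Filter.atTop (nhds 0) := by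
  -- Step 1: S is unbounded.
  have hS_inf : ∀ N : ℕ, ∃ k, N ≤ k ∧ k ∈ S := by
    intro N
    by_contra h
    push_neg at h
    have hgrow : ∀ n : ℕ, γ₂ ^ n * ς N ≤ ς (N + n) := by
      intro n
      induction n with
      | zero => simp
      | succ n ih =>
        have hNS : (N + n) ∉ S := h (N + n) (Nat.le_add_right _ _)
        have := (hfail (N + n) hNS).2
        calc γ₂ ^ (n + 1) * ς N = γ₂ * (γ₂ ^ n * ς N) := by ring
          _ ≤ γ₂ * ς (N + n) := by
              apply mul_le_mul_of_nonneg_left ih (by linarith)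
          _ ≤ ς (N + n + 1) := this
          _ = ς (N + (n + 1)) := by ring_nf
    obtain ⟨n, hn⟩ := pow_unbounded_of_one_lt (ςmax / ς N) hγ₂
    have h1 : γ₂ ^ n * ς N ≤ ςmax := le_trans (hgrow n) (hcap _)
    have h2 : ςmax < γ₂ ^ n * ς N := by
      have := (div_lt_iff₀ (hςpos N)).mp hn
      linarith
    linarith
  -- Step 2: tendsto.
  rw [Metric.tendsto_atTop]
  intro ε hε
  have hε2 : 0 < ε / 2 := by linarith
  obtain ⟨M, hM⟩ : ∃ M : ℕ, ∀ k ∈ S, M ≤ k → g (k + 1) ≤ ε / 2 := by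
    have hF := hfin (ε / 2) hε2
    obtain ⟨M, hM⟩ := hF.bddAbove
    refine ⟨M + 1, fun k hk hMk => ?_⟩
    by_contra hgk
    push_neg at hgk
    have : k ≤ M := hM ⟨hk, hgk⟩
    omega
  obtain ⟨k₀, hk₀M, hk₀S⟩ := hS_inf M
  refine ⟨k₀ + 1, fun m hm => ?_⟩
  have key : ∀ m, k₀ + 1 ≤ m → g m ≤ ε / 2 := by
    intro m hm
    induction m, hm using Nat.le_induction with
    | base => exact hM k₀ hk₀S hk₀M
    | succ m hm ih =>
      by_cases hmS : m ∈ S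
      · exact hM m hmS (le_trans hk₀M (by omega))
      · rw [(hfail m hmS).1]; exact ih
  have := key m hm
  rw [Real.dist_eq, sub_zero, abs_of_nonneg (hg m)]
  linarith
end
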